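/- arXiv:2407.11328 — 2 statements merged into one kernel-verified Lean document; each statement's English description precedes it below -/
import Mathlib

section
/- Let X₁ and X₂ be degree-similar finite simple graphs with X₁ connected, let d₁,…,d_k be the distinct vertex degrees occurring in X₁, and for each j let V_j^{(i)} = {v ∈ V(Xᵢ) : deg_{Xᵢ}(v) = d_j} and n_j := |V_j^{(1)}|. Fix l with l ≤ k. For i ∈ {1,2} let Γᵢ be the graph obtained from Xᵢ by, for each j ∈ {1,…,l}, adding n_j new vertices and joining each of them to every vertex of V_j^{(i)} (the new vertices are pairwise nonadjacent, including between different values of j). Then Γ₁ and Γ₂ are degree similar. -/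
open Matrix

open Classical in
noncomputable def adjMat {V : Type*} (G : SimpleGraph V) : Matrix V V ℝ :=
  Matrix.of fun a b => if G.Adj a b then 1 else 0

noncomputable def gdeg {V : Type*} (G : SimpleGraph V) (v : V) : ℕ :=
  Nat.card (G.neighborSet v)

noncomputable def degMat {V : Type*} [DecidableEq V] (G : SimpleGraph V) : Matrix V V ℝ :=
  Matrix.diagonal fun v => (gdeg G v : ℝ)

/-- Two graphs (on possibly different vertex types of the same cardinality) are
degree similar if there is an invertible real matrix conjugating the adjacency
matrix of the first to that of the second, and likewise for the degree matrices. -/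
def DegreeSimilar {V W : Type*} [Fintype V] [Fintype W] [DecidableEq V] [DecidableEq W]
    (G : SimpleGraph V) (H : SimpleGraph W) : Prop :=
  ∃ (e : V ≃ W) (M : Matrix V V ℝ), IsUnit M ∧
    M⁻¹ * adjMat G * M = (adjMat H).submatrix ⇑e ⇑e ∧
    M⁻¹ * degMat G * M = (degMat H).submatrix ⇑e ⇑e

/-- The graph obtained from `X` by adding, for each `j : Fin l`, a set of `N j` new
vertices, each joined to every vertex of `X` of degree `dd j`; the new vertices are
pairwise nonadjacent. -/
def addDominators {V : Type*} (X : SimpleGraph V) {l : ℕ} (dd : Fin l → ℕ)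
    (N : Fin l → ℕ) : SimpleGraph (V ⊕ Σ j : Fin l, Fin (N j)) :=
  SimpleGraph.fromRel fun a b =>
    match a, b with
    | Sum.inl a, Sum.inl b => X.Adj a b
    | Sum.inl a, Sum.inr b => gdeg X a = dd b.1
    | _, _ => False

/-! Since `M` commutes `D(X₁)` into `D(X₂)`, an entry `M u v` can be nonzero only when `u` and
`v` have the same degree. Hence `M` commutes `φ(D(X₁))` into `φ(D(X₂))` for every function `φ`
of the degree, and comparing traces shows that both graphs have the same number of vertices of
each degree. `M` also conjugates the Laplacians; the Laplacian kernel of the connected graph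
`X₁` consists of the constant vectors, so the same holds for `X₂`, and the all-ones vector
is an eigenvector of both `M` and `Mᵀ`. Therefore all row and column sums of `M` equal one
`c ≠ 0`, and `M ⊕ c • 1` conjugates the matrices of the extended graphs: the block joining the
new vertices to the old ones is a function of the degree of the old vertex only. -/

namespace Matrix

section Diagonal

variable {n R : Type*} [Fintype n] [DecidableEq n]

theorem inv_mul_mul_eq_iff [CommRing R] {M X Y : Matrix n n R} (hM : IsUnit M) :
    M⁻¹ * X * M = Y ↔ X * M = M * Y := by
  have := hM.invertible
  rw [mul_assoc, inv_mul_eq_iff_eq_mul_of_invertible]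

theorem eq_of_diagonal_mul_eq_mul_diagonal [CommRing R] [IsDomain R] {M : Matrix n n R}
    {f g : n → R} (h : diagonal f * M = M * diagonal g) {u v : n} (huv : M u v ≠ 0) :
    f u = g v := by
  have huv' := congrFun (congrFun h u) v
  rw [diagonal_mul, mul_diagonal, mul_comm] at huv'
  exact mul_left_cancel₀ huv huv'

theorem diagonal_comp_mul_eq_mul_diagonal_comp [CommSemiring R] {α : Type*} {M : Matrix n n R}
    {f g : n → α} (hfg : ∀ u v, M u v ≠ 0 → f u = g v) (φ : α → R) :
    diagonal (φ ∘ f) * M = M * diagonal (φ ∘ g) := by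
  ext u v
  rw [diagonal_mul, mul_diagonal]
  by_cases huv : M u v = 0
  · simp [huv]
  · rw [Function.comp_apply, Function.comp_apply, hfg u v huv, mul_comm]

theorem card_fiber_eq_of_isUnit [CommRing R] [CharZero R] {α : Type*} {M : Matrix n n R}
    {f g : n → α} (hM : IsUnit M) (hfg : ∀ u v, M u v ≠ 0 → f u = g v) (a : α) :
    Nat.card {u // f u = a} = Nat.card {v // g v = a} := by
  classical
  have hconj := (inv_mul_mul_eq_iff hM).mpr
    (diagonal_comp_mul_eq_mul_diagonal_comp hfg fun b => if b = a then (1 : R) else 0)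
  have htrace := congrArg trace hconj
  rw [trace_mul_cycle, mul_nonsing_inv _ ((isUnit_iff_isUnit_det M).mp hM), one_mul,
    trace_diagonal, trace_diagonal] at htrace
  simp only [Function.comp_apply, Finset.sum_boole] at htrace
  rw [Nat.card_eq_fintype_card, Nat.card_eq_fintype_card, Fintype.card_subtype,
    Fintype.card_subtype]
  exact_mod_cast htrace

end Diagonal

section RowColSums

variable {n m R α : Type*} [Fintype n] [CommSemiring R] {M : Matrix n n R} {f g : n → α} {c : R}

theorem mul_of_comp_eq_smul (hfg : ∀ u v, M u v ≠ 0 → f u = g v) (hrow : ∀ u, ∑ v, M u v = c)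
    (ψ : α → m → R) : M * of (ψ ∘ g) = c • of (ψ ∘ f) := by
  ext u b
  have hterm (v : n) : M u v * ψ (g v) b = M u v * ψ (f u) b := by
    by_cases huv : M u v = 0
    · simp [huv]
    · rw [hfg u v huv]
  simp [mul_apply, hterm, ← Finset.sum_mul, hrow]

theorem transpose_of_comp_mul_eq_smul (hfg : ∀ u v, M u v ≠ 0 → f u = g v)
    (hcol : ∀ v, ∑ u, M u v = c) (ψ : α → m → R) : (of (ψ ∘ f))ᵀ * M = c • (of (ψ ∘ g))ᵀ := by
  have h := mul_of_comp_eq_smul (M := Mᵀ) (fun u v huv => (hfg v u huv).symm) hcol ψ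
  have h' := congrArg transpose h
  rwa [transpose_mul, transpose_transpose, transpose_smul] at h'

end RowColSums

end Matrix

namespace SimpleGraph

variable {V : Type*} [Fintype V]

theorem gdeg_eq_degree (G : SimpleGraph V) [DecidableRel G.Adj] (v : V) :
    gdeg G v = G.degree v := by
  rw [gdeg, Nat.card_eq_fintype_card, card_neighborSet_eq_degree]

theorem degMat_sub_adjMat [DecidableEq V] (G : SimpleGraph V) [DecidableRel G.Adj] :
    degMat G - adjMat G = G.lapMatrix ℝ := by
  ext u v
  by_cases huv : u = v
  · subst huv
    simp [degMat, adjMat, lapMatrix, degMatrix, gdeg_eq_degree]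
  · simp [degMat, adjMat, lapMatrix, degMatrix, adjMatrix, huv]

variable [DecidableEq V] {G H : SimpleGraph V} [DecidableRel G.Adj] [DecidableRel H.Adj]
  {M : Matrix V V ℝ}

theorem Connected.eq_of_lapMatrix_mulVec_eq_zero (hG : G.Connected) {x : V → ℝ}
    (hx : G.lapMatrix ℝ *ᵥ x = 0) (u v : V) : x u = x v :=
  (lapMatrix_mulVec_eq_zero_iff_forall_reachable G).mp hx u v (hG.preconnected u v)

theorem lapMatrix_mulVec_mulVec_eq_zero (hL : G.lapMatrix ℝ * M = M * H.lapMatrix ℝ)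
    {x : V → ℝ} (hx : H.lapMatrix ℝ *ᵥ x = 0) : G.lapMatrix ℝ *ᵥ (M *ᵥ x) = 0 := by
  rw [Matrix.mulVec_mulVec, hL, ← Matrix.mulVec_mulVec, hx, Matrix.mulVec_zero]

theorem Connected.exists_mulVec_one_eq (hG : G.Connected) (hM : IsUnit M)
    (hL : G.lapMatrix ℝ * M = M * H.lapMatrix ℝ) : ∃ c ≠ 0, M *ᵥ 1 = fun _ => c := by
  obtain ⟨v₀⟩ := hG.nonempty
  have hconst := hG.eq_of_lapMatrix_mulVec_eq_zero
    (lapMatrix_mulVec_mulVec_eq_zero hL H.lapMatrix_mulVec_const_eq_zero)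
  refine ⟨(M *ᵥ 1) v₀, fun hc => ?_, funext fun v => hconst v v₀⟩
  have hzero : M *ᵥ 1 = M *ᵥ 0 := by
    rw [Matrix.mulVec_zero]
    exact funext fun v => (hconst v v₀).trans hc
  exact one_ne_zero (congrFun (Matrix.mulVec_injective_iff_isUnit.mpr hM hzero) v₀)

theorem Connected.of_lapMatrix_mul_eq (hG : G.Connected) (hM : IsUnit M)
    (hL : G.lapMatrix ℝ * M = M * H.lapMatrix ℝ) : H.Connected := by
  classical
  obtain ⟨v₀⟩ := hG.nonempty
  obtain ⟨c, hc, hc1⟩ := hG.exists_mulVec_one_eq hM hL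
  have hker_const : ∀ x : V → ℝ, H.lapMatrix ℝ *ᵥ x = 0 → ∀ u v, x u = x v := by
    intro x hx u v
    have hMx := hG.eq_of_lapMatrix_mulVec_eq_zero (lapMatrix_mulVec_mulVec_eq_zero hL hx)
    have hy : M *ᵥ (c • x) = M *ᵥ ((M *ᵥ x) v₀ • 1) := by
      rw [Matrix.mulVec_smul, Matrix.mulVec_smul, hc1]
      funext w
      simp [hMx w v₀, mul_comm]
    have hcx := congrFun (Matrix.mulVec_injective_iff_isUnit.mpr hM hy)
    simpa [hc] using (hcx u).trans (hcx v).symm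
  refine (connected_iff_exists_forall_reachable H).mpr ⟨v₀, fun w => ?_⟩
  let x : V → ℝ := fun u => if H.Reachable v₀ u then 1 else 0
  have hx : H.lapMatrix ℝ *ᵥ x = 0 :=
    (lapMatrix_mulVec_eq_zero_iff_forall_reachable H).mpr fun i j hij => by
      simp only [x, show H.Reachable v₀ i ↔ H.Reachable v₀ j from
        ⟨fun h => h.trans hij, fun h => h.trans hij.symm⟩]
  by_contra hw
  simpa [x, hw] using hker_const x hx v₀ w


theorem Connected.exists_row_col_sum_eq (hG : G.Connected) (hM : IsUnit M)
    (hL : G.lapMatrix ℝ * M = M * H.lapMatrix ℝ) :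
    ∃ c ≠ 0, (∀ u, ∑ v, M u v = c) ∧ ∀ v, ∑ u, M u v = c := by
  have hLT : H.lapMatrix ℝ * Mᵀ = Mᵀ * G.lapMatrix ℝ := by
    simpa only [Matrix.transpose_mul, (isSymm_lapMatrix ℝ G).eq, (isSymm_lapMatrix ℝ H).eq]
      using (congrArg Matrix.transpose hL).symm
  obtain ⟨c, hc, hrow⟩ := hG.exists_mulVec_one_eq hM hL
  obtain ⟨c', -, hcol⟩ := (hG.of_lapMatrix_mul_eq hM hL).exists_mulVec_one_eq
    ((Matrix.isUnit_transpose M).mpr hM) hLT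
  have hrow' (u : V) : ∑ v, M u v = c := by
    simpa [Matrix.mulVec, dotProduct] using congrFun hrow u
  have hcol' (v : V) : ∑ u, M u v = c' := by
    simpa [Matrix.mulVec, dotProduct] using congrFun hcol v
  have hcard : (Fintype.card V : ℝ) ≠ 0 := by
    have := hG.nonempty
    positivity
  have hcc' : c' = c := by
    refine mul_left_cancel₀ hcard ?_
    calc (Fintype.card V : ℝ) * c' = ∑ v, ∑ u, M u v := by simp [hcol']
      _ = ∑ u, ∑ v, M u v := Finset.sum_comm
      _ = Fintype.card V * c := by simp [hrow']
  exact ⟨c, hc, hrow', hcc' ▸ hcol'⟩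

end SimpleGraph

section AddDominators

variable {V : Type*} {l : ℕ} (X : SimpleGraph V) (dd N : Fin l → ℕ)

@[simp]
theorem addDominators_adj_inl_inl {a b : V} :
    (addDominators X dd N).Adj (.inl a) (.inl b) ↔ X.Adj a b := by
  simpa [addDominators, X.adj_comm b a] using fun h : X.Adj a b => h.ne

@[simp]
theorem addDominators_adj_inl_inr {a : V} {b : Σ j, Fin (N j)} :
    (addDominators X dd N).Adj (.inl a) (.inr b) ↔ gdeg X a = dd b.1 := by
  simp [addDominators]

@[simp]
theorem addDominators_adj_inr_inl {a : V} {b : Σ j, Fin (N j)} :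
    (addDominators X dd N).Adj (.inr b) (.inl a) ↔ gdeg X a = dd b.1 := by
  simp [addDominators]

@[simp]
theorem addDominators_not_adj_inr_inr {a b : Σ j, Fin (N j)} :
    ¬ (addDominators X dd N).Adj (.inr a) (.inr b) := by
  simp [addDominators]

theorem gdeg_addDominators_inl [Finite V] (v : V) :
    gdeg (addDominators X dd N) (.inl v)
      = gdeg X v + Nat.card {b : Σ j, Fin (N j) // gdeg X v = dd b.1} := by
  change Nat.card _ = Nat.card (X.neighborSet v) + _
  rw [← Nat.card_sum]
  refine Nat.card_congr (Equiv.subtypeSum.trans (Equiv.sumCongr ?_ ?_)) <;>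
    exact Equiv.subtypeEquivRight fun _ => by simp

theorem gdeg_addDominators_inr [Finite V] (b : Σ j, Fin (N j)) :
    gdeg (addDominators X dd N) (.inr b) = Nat.card {w : V // gdeg X w = dd b.1} := by
  refine Nat.card_congr ((Equiv.subtypeSum.trans (Equiv.sumCongr ?_ ?_)).trans
    (Equiv.sumEmpty _ {b : Σ j, Fin (N j) // False})) <;>
    exact Equiv.subtypeEquivRight fun _ => by simp

open Classical in
noncomputable def dominatorIncidence (s : ℕ) (b : Σ j, Fin (N j)) : ℝ :=
  if s = dd b.1 then 1 else 0

theorem adjMat_addDominators :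
    adjMat (addDominators X dd N) = Matrix.fromBlocks (adjMat X)
      (.of (dominatorIncidence dd N ∘ gdeg X)) (.of (dominatorIncidence dd N ∘ gdeg X))ᵀ 0 := by
  ext (a | a) (b | b)
  · simp only [adjMat, Matrix.of_apply, Matrix.fromBlocks_apply₁₁]
    rw [addDominators_adj_inl_inl]
  all_goals simp [adjMat, dominatorIncidence]

theorem degMat_addDominators [Finite V] [DecidableEq V] :
    degMat (addDominators X dd N) = Matrix.fromBlocks
      (.diagonal ((fun s => (s + Nat.card {b : Σ j, Fin (N j) // s = dd b.1} : ℝ)) ∘ gdeg X)) 0 0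
      (.diagonal fun b => (Nat.card {w : V // gdeg X w = dd b.1} : ℝ)) := by
  ext (a | a) (b | b) <;>
    simp [degMat, Matrix.diagonal_apply, gdeg_addDominators_inl, gdeg_addDominators_inr]

end AddDominators

section Comap

variable {V W : Type*}

theorem adjMat_comap (f : V → W) (H : SimpleGraph W) :
    adjMat (H.comap f) = (adjMat H).submatrix f f :=
  rfl

theorem gdeg_comap_equiv (e : V ≃ W) (H : SimpleGraph W) (v : V) :
    gdeg (H.comap e) v = gdeg H (e v) :=
  Nat.card_congr (e.subtypeEquiv fun _ => Iff.rfl)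

theorem degMat_comap_equiv [DecidableEq V] [DecidableEq W] (e : V ≃ W) (H : SimpleGraph W) :
    degMat (H.comap e) = (degMat H).submatrix e e := by
  simp only [degMat, Matrix.submatrix_diagonal_equiv, Function.comp_def, gdeg_comap_equiv]

theorem addDominators_comap_sumCongr (e : V ≃ W) (X : SimpleGraph W) {l : ℕ}
    (dd N : Fin l → ℕ) :
    (addDominators X dd N).comap (e.sumCongr (.refl _)) = addDominators (X.comap e) dd N := by
  ext (a | a) (b | b) <;> simp [gdeg_comap_equiv]

theorem degreeSimilar_iff_exists_comap [Fintype V] [Fintype W] [DecidableEq V] [DecidableEq W]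
    {G : SimpleGraph V} {H : SimpleGraph W} :
    DegreeSimilar G H ↔ ∃ (e : V ≃ W) (M : Matrix V V ℝ), IsUnit M ∧
      adjMat G * M = M * adjMat (H.comap e) ∧ degMat G * M = M * degMat (H.comap e) := by
  simp only [DegreeSimilar, adjMat_comap, degMat_comap_equiv]
  exact exists_congr fun _ => exists_congr fun _ => and_congr_right fun hM => by
    rw [Matrix.inv_mul_mul_eq_iff hM, Matrix.inv_mul_mul_eq_iff hM]

end Comap

theorem exists_conj_addDominators {V : Type*} [Fintype V] [DecidableEq V]
    {X₁ X₂ : SimpleGraph V} (hconn : X₁.Connected) {M : Matrix V V ℝ} (hM : IsUnit M)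
    (hA : adjMat X₁ * M = M * adjMat X₂) (hD : degMat X₁ * M = M * degMat X₂) {l : ℕ}
    (dd N : Fin l → ℕ) :
    ∃ M' : Matrix (V ⊕ Σ j, Fin (N j)) (V ⊕ Σ j, Fin (N j)) ℝ, IsUnit M' ∧
      adjMat (addDominators X₁ dd N) * M' = M' * adjMat (addDominators X₂ dd N) ∧
      degMat (addDominators X₁ dd N) * M' = M' * degMat (addDominators X₂ dd N) := by
  classical
  have hsupp : ∀ u v, M u v ≠ 0 → gdeg X₁ u = gdeg X₂ v := fun _ _ huv =>
    Nat.cast_injective (Matrix.eq_of_diagonal_mul_eq_mul_diagonal hD huv)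
  have hL : X₁.lapMatrix ℝ * M = M * X₂.lapMatrix ℝ := by
    rw [← SimpleGraph.degMat_sub_adjMat, ← SimpleGraph.degMat_sub_adjMat, Matrix.sub_mul,
      Matrix.mul_sub, hA, hD]
  obtain ⟨c, hc, hrow, hcol⟩ := hconn.exists_row_col_sum_eq hM hL
  refine ⟨Matrix.fromBlocks M 0 0 (c • 1), ?_, ?_, ?_⟩
  · rw [Matrix.isUnit_iff_isUnit_det, Matrix.det_fromBlocks_zero₂₁, Matrix.det_smul,
      Matrix.det_one, mul_one]
    exact ((Matrix.isUnit_iff_isUnit_det M).mp hM).mul (hc.isUnit.pow _)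
  · rw [adjMat_addDominators, adjMat_addDominators, Matrix.fromBlocks_multiply,
      Matrix.fromBlocks_multiply, Matrix.mul_of_comp_eq_smul hsupp hrow,
      Matrix.transpose_of_comp_mul_eq_smul hsupp hcol]
    simp [hA]
  · rw [degMat_addDominators, degMat_addDominators, Matrix.fromBlocks_multiply,
      Matrix.fromBlocks_multiply, Matrix.diagonal_comp_mul_eq_mul_diagonal_comp hsupp]
    simp only [Matrix.card_fiber_eq_of_isUnit (R := ℝ) hM hsupp]
    simp

theorem degreeSimilar_addDominators_general {V : Type*} [Fintype V] [DecidableEq V] {k : ℕ}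
    (X₁ X₂ : SimpleGraph V) (hconn : X₁.Connected) (h : DegreeSimilar X₁ X₂)
    (d : Fin k → ℕ)
    (l : ℕ) (hl : l ≤ k) :
    DegreeSimilar
      (addDominators X₁ (fun j => d (Fin.castLE hl j))
        (fun j => Nat.card {x : V // gdeg X₁ x = d (Fin.castLE hl j)}))
      (addDominators X₂ (fun j => d (Fin.castLE hl j))
        (fun j => Nat.card {x : V // gdeg X₁ x = d (Fin.castLE hl j)})) := by
  obtain ⟨e, M, hM, hA, hD⟩ := degreeSimilar_iff_exists_comap.mp h
  obtain ⟨M', hM', hA', hD'⟩ := exists_conj_addDominators hconn hM hA hD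
    (fun j => d (Fin.castLE hl j)) (fun j => Nat.card {x : V // gdeg X₁ x = d (Fin.castLE hl j)})
  rw [← addDominators_comap_sumCongr] at hA' hD'
  exact degreeSimilar_iff_exists_comap.mpr ⟨_, M', hM', hA', hD'⟩

/-- Let `X₁, X₂` be degree similar with `X₁` connected, let `d 0, …, d (k-1)` be the
distinct degrees occurring in `X₁`, with `n j` vertices of degree `d j` in `X₁`, and
fix `l ≤ k`.  Adding, for each `j < l`, a set of `n j` new vertices joined to all
vertices of degree `d j` (in `X₁` for `Γ₁`, in `X₂` for `Γ₂`) yields degree-similar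
graphs. -/
theorem degreeSimilar_addDominators {V : Type*} [Fintype V] [DecidableEq V] {k : ℕ}
    (X₁ X₂ : SimpleGraph V) (hconn : X₁.Connected) (h : DegreeSimilar X₁ X₂)
    (d : Fin k → ℕ) (hinj : Function.Injective d)
    (hall : ∀ x : V, ∃ j, gdeg X₁ x = d j)
    (hocc : ∀ j, ∃ x : V, gdeg X₁ x = d j)
    (l : ℕ) (hl : l ≤ k) :
    DegreeSimilar
      (addDominators X₁ (fun j => d (Fin.castLE hl j))
        (fun j => Nat.card {x : V // gdeg X₁ x = d (Fin.castLE hl j)}))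
      (addDominators X₂ (fun j => d (Fin.castLE hl j))
        (fun j => Nat.card {x : V // gdeg X₁ x = d (Fin.castLE hl j)})) :=
  degreeSimilar_addDominators_general X₁ X₂ hconn h d l hl
end

section
/- Let X₁ and X₂ be finite simple graphs on n vertices with adjacency matrices A₁, A₂ and degree matrices D₁, D₂. If the matrices A₁ − μD₁ and A₂ − μD₂ are similar over the field ℚ(μ) of rational functions (the fraction field of ℚ[μ]), then A₁ and A₂ are similar over ℚ, and D₁ and D₂ are similar over ℚ. -/
open Matrix

open Classical in
/-- The adjacency matrix of a graph, with rational entries. -/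
noncomputable def adjMatQ {V : Type*} (G : SimpleGraph V) : Matrix V V ℚ :=
  Matrix.of fun a b => if G.Adj a b then 1 else 0

/-- The degree matrix of a graph, with rational entries. -/
noncomputable def degMatQ {V : Type*} [DecidableEq V] (G : SimpleGraph V) : Matrix V V ℚ :=
  Matrix.diagonal fun v => (gdeg G v : ℚ)

/-- The field `ℚ(μ)` of rational functions, i.e. the fraction field of `ℚ[μ]`. -/
abbrev RatFuncQ : Type := FractionRing (Polynomial ℚ)

/-- The indeterminate `μ` viewed in `ℚ(μ)`. -/
noncomputable def muQ : RatFuncQ := algebraMap (Polynomial ℚ) RatFuncQ Polynomial.X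

/-- The matrix `A(G) - μ D(G)`, regarded as a matrix over `ℚ(μ)`. -/
noncomputable def AmuQ {V : Type*} [Fintype V] [DecidableEq V] (G : SimpleGraph V) :
    Matrix V V RatFuncQ :=
  (adjMatQ G).map (fun x => algebraMap (Polynomial ℚ) RatFuncQ (Polynomial.C x))
    - muQ • (degMatQ G).map (fun x => algebraMap (Polynomial ℚ) RatFuncQ (Polynomial.C x))

/-!
Similarity over `ℚ(μ)` makes the characteristic polynomials `det (x - A + μ D)` of the two
pencils equal as polynomials in `x` and `μ`. Specialising `μ = 0` gives `χ_A₁ = χ_A₂`. Since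
`D - ν A = -ν (A - ν⁻¹ D)`, the characteristic polynomials of `D₁ - ν A₁` and `D₂ - ν A₂` agree for
every `ν ≠ 0`, hence, being polynomial in `ν`, also at `ν = 0`: `χ_D₁ = χ_D₂`.

Both `A` and `D` are symmetric, and real symmetric matrices with the same characteristic
polynomial are orthogonally similar to the same diagonal matrix. Similarity over `ℝ` descends to
`ℚ`: writing a conjugating real matrix as `∑ bⱼ Nⱼ` with `bⱼ` linearly independent over `ℚ` and
`Nⱼ` rational, every `Nⱼ` intertwines the two matrices, and `det (∑ xⱼ Nⱼ)` is a polynomial in `x`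
that is nonzero at `b`, hence nonzero at some rational point.
-/

open Polynomial

theorem Polynomial.eq_of_infinite_map_eval_eq {R : Type*} [CommRing R] [IsDomain R]
    {P Q : R[X][X]} {s : Set R} (hs : s.Infinite)
    (h : ∀ t ∈ s, P.map (evalRingHom t) = Q.map (evalRingHom t)) : P = Q := by
  ext1 k
  refine eq_of_infinite_eval_eq _ _ (hs.mono fun t ht => ?_)
  simpa using congrArg (coeff · k) (h t ht)

namespace Matrix

variable {n : Type*} [Fintype n] [DecidableEq n]

section Similarity

variable {R : Type*} [CommRing R]

theorem isConj_iff_exists_isUnit_nonsing_inv_mul_mul_eq {A B : Matrix n n R} :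
    IsConj A B ↔ ∃ N, IsUnit N ∧ N⁻¹ * A * N = B := by
  rw [isConj_comm]
  constructor
  · rintro ⟨c, hc⟩
    refine ⟨c, c.isUnit, ?_⟩
    rw [mul_assoc, ← hc.eq, ← mul_assoc,
      nonsing_inv_mul _ ((isUnit_iff_isUnit_det _).mp c.isUnit), one_mul]
  · rintro ⟨N, hN, rfl⟩
    refine ⟨hN.unit, ?_⟩
    rw [SemiconjBy, IsUnit.unit_spec, ← mul_assoc, ← mul_assoc,
      mul_nonsing_inv _ ((isUnit_iff_isUnit_det _).mp hN), one_mul]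

theorem IsConj.charpoly_eq {A B : Matrix n n R} (h : IsConj A B) : A.charpoly = B.charpoly := by
  obtain ⟨c, hc⟩ := h
  rw [← charpoly_units_conj c A, hc.eq, mul_assoc,
    mul_nonsing_inv _ ((isUnit_iff_isUnit_det _).mp c.isUnit), mul_one]

theorem charpoly_eq_of_isConj_map {S : Type*} [CommRing S] {f : R →+* S}
    (hf : Function.Injective f) {A B : Matrix n n R} (h : IsConj (A.map f) (B.map f)) :
    A.charpoly = B.charpoly := by
  apply Polynomial.map_injective f hf
  rw [← charpoly_map, ← charpoly_map, h.charpoly_eq]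

end Similarity

section Descent

variable {K L : Type*} [Field K] [CommRing L] [Algebra K L]

omit [DecidableEq n] in
theorem exists_linearIndependent_sum_smul_map (M : Matrix n n L) :
    ∃ (k : ℕ) (b : Fin k → L) (N : Fin k → Matrix n n K), LinearIndependent K b ∧
      M = ∑ j, b j • (N j).map (algebraMap K L) := by
  set E := Submodule.span K (Set.range fun p : n × n => M p.1 p.2)
  have : Module.Finite K E := FiniteDimensional.span_of_finite K (Set.finite_range _)
  have hmem (u v : n) : M u v ∈ E := Submodule.subset_span ⟨(u, v), rfl⟩
  let b := Module.finBasis K E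
  refine ⟨_, fun j => b j, fun j => of fun u v => b.repr ⟨M u v, hmem u v⟩ j,
    b.linearIndependent.map' E.subtype E.ker_subtype, ?_⟩
  ext u v
  have hsum := congrArg Subtype.val (b.sum_repr ⟨M u v, hmem u v⟩)
  simp only [AddSubmonoidClass.coe_finsetSum, SetLike.val_smul] at hsum
  simp only [Matrix.sum_apply, Matrix.smul_apply, map_apply, of_apply, smul_eq_mul]
  conv_lhs => rw [← hsum]
  simp [Algebra.smul_def, mul_comm]

omit [Fintype n] [DecidableEq n] in
theorem eq_zero_of_sum_smul_map_eq_zero {k : ℕ} {b : Fin k → L} (hb : LinearIndependent K b)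
    {C : Fin k → Matrix n n K} (h : ∑ j, b j • (C j).map (algebraMap K L) = 0) (j : Fin k) :
    C j = 0 := by
  ext u v
  refine Fintype.linearIndependent_iff.mp hb (fun j => C j u v) ?_ j
  have huv := congrFun (congrFun h u) v
  simp only [Matrix.sum_apply, Matrix.smul_apply, map_apply, smul_eq_mul, zero_apply] at huv
  simpa [Algebra.smul_def, mul_comm] using huv

theorem aeval_det_sum_X_smul_map {R S : Type*} [CommRing R] [CommRing S] [Algebra R S] {k : ℕ}
    (N : Fin k → Matrix n n R) (x : Fin k → S) :
    MvPolynomial.aeval x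
        (∑ j, (MvPolynomial.X j : MvPolynomial (Fin k) R) • (N j).map MvPolynomial.C).det =
      (∑ j, x j • (N j).map (algebraMap R S)).det := by
  rw [AlgHom.map_det]
  congr 1
  ext u v
  simp [Matrix.sum_apply]

theorem exists_isUnit_sum_smul [Infinite K] [Nontrivial L] {k : ℕ} (b : Fin k → L)
    (N : Fin k → Matrix n n K) (h : IsUnit (∑ j, b j • (N j).map (algebraMap K L))) :
    ∃ x : Fin k → K, IsUnit (∑ j, x j • N j) := by
  set p : MvPolynomial (Fin k) K :=
    (∑ j, (MvPolynomial.X j : MvPolynomial (Fin k) K) • (N j).map MvPolynomial.C).det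
  have hp : p ≠ 0 := by
    intro hp
    have hdet : MvPolynomial.aeval b p = _ := aeval_det_sum_X_smul_map N b
    rw [hp, map_zero] at hdet
    exact ((isUnit_iff_isUnit_det _).mp h).ne_zero hdet.symm
  obtain ⟨x, hx⟩ : ∃ x, MvPolynomial.eval x p ≠ 0 := by
    by_contra! hx
    exact hp (MvPolynomial.funext fun x => by simpa using hx x)
  refine ⟨x, (isUnit_iff_isUnit_det _).mpr (isUnit_iff_ne_zero.mpr ?_)⟩
  have hdet : MvPolynomial.aeval x p = _ := aeval_det_sum_X_smul_map N x
  simp only [Algebra.algebraMap_self, RingHom.coe_id, Matrix.map_id] at hdet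
  rwa [← hdet]

theorem isConj_of_isConj_map [Infinite K] [Nontrivial L] {A B : Matrix n n K}
    (h : IsConj (A.map (algebraMap K L)) (B.map (algebraMap K L))) : IsConj A B := by
  obtain ⟨c, hc⟩ := h
  obtain ⟨k, b, N, hb, hc_eq⟩ := exists_linearIndependent_sum_smul_map (K := K) c.val
  have hN (j : Fin k) : N j * A = B * N j := by
    rw [← sub_eq_zero]
    refine eq_zero_of_sum_smul_map_eq_zero hb (C := fun j => N j * A - B * N j) ?_ j
    have hc' : (c : Matrix n n L) * A.map (algebraMap K L) - B.map (algebraMap K L) * c = 0 :=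
      sub_eq_zero.mpr hc
    rw [hc_eq, Finset.sum_mul, Finset.mul_sum, ← Finset.sum_sub_distrib] at hc'
    simpa only [Matrix.map_sub _ (map_sub (algebraMap K L)), Matrix.map_mul, smul_sub,
      Matrix.smul_mul, Matrix.mul_smul] using hc'
  obtain ⟨x, hx⟩ := exists_isUnit_sum_smul b N (hc_eq ▸ c.isUnit)
  exact ⟨hx.unit, by simp [SemiconjBy, Finset.sum_mul, Finset.mul_sum, hN]⟩

end Descent

theorem IsHermitian.isConj_of_charpoly_eq {𝕜 : Type*} [RCLike 𝕜] {A B : Matrix n n 𝕜}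
    (hA : A.IsHermitian) (hB : B.IsHermitian) (h : A.charpoly = B.charpoly) : IsConj A B := by
  have hdiag {M : Matrix n n 𝕜} (hM : M.IsHermitian) :
      IsConj (diagonal (RCLike.ofReal ∘ hM.eigenvalues)) M :=
    ⟨Unitary.toUnits hM.eigenvectorUnitary, by
      conv_rhs => rw [hM.spectral_theorem]
      simp [SemiconjBy, mul_assoc]⟩
  have hAB := (hdiag hA).symm
  rw [(hA.eigenvalues_eq_eigenvalues_iff hB).mpr h] at hAB
  exact hAB.trans (hdiag hB)

theorem isConj_of_isSymm_of_charpoly_eq {K : Type*} [Field K] [Algebra K ℝ]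
    {A B : Matrix n n K} (hA : A.IsSymm) (hB : B.IsSymm) (h : A.charpoly = B.charpoly) :
    IsConj A B := by
  have : CharZero K := (RingHom.charZero_iff (algebraMap K ℝ).injective).mpr inferInstance
  refine isConj_of_isConj_map (L := ℝ) (IsHermitian.isConj_of_charpoly_eq ?_ ?_ ?_)
  · exact isHermitian_iff_isSymm.mpr (hA.map _)
  · exact isHermitian_iff_isSymm.mpr (hB.map _)
  · rw [charpoly_map, charpoly_map, h]

section Pencil

variable {R : Type*} [CommRing R]

noncomputable def pencil (A D : Matrix n n R) : Matrix n n R[X] :=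
  A.map C - (X : R[X]) • D.map C

omit [Fintype n] [DecidableEq n] in
theorem pencil_map_eval (A D : Matrix n n R) (t : R) :
    (pencil A D).map (evalRingHom t) = A - t • D := by
  ext
  simp [pencil, mul_comm (D _ _)]

theorem charpoly_pencil_map_eval (A D : Matrix n n R) (t : R) :
    (pencil A D).charpoly.map (evalRingHom t) = (A - t • D).charpoly := by
  rw [← charpoly_map, pencil_map_eval]

theorem charpoly_eq_of_charpoly_pencil_eq {A B D E : Matrix n n R}
    (h : (pencil A D).charpoly = (pencil B E).charpoly) : A.charpoly = B.charpoly := by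
  simpa [charpoly_pencil_map_eval] using congrArg (Polynomial.map (evalRingHom 0)) h

variable {K : Type*} [Field K] [Infinite K]

theorem charpoly_smul_eq_of_charpoly_eq {M N : Matrix n n K} (c : K)
    (h : M.charpoly = N.charpoly) : (c • M).charpoly = (c • N).charpoly := by
  rcases eq_or_ne c 0 with rfl | hc
  · simp
  have hscale (P : Matrix n n K) (s : K) :
      (c • P).charpoly.eval s = c ^ Fintype.card n * P.charpoly.eval (c⁻¹ * s) := by
    rw [eval_charpoly, eval_charpoly, ← det_smul, smul_sub]
    congr 2
    ext i j
    rcases eq_or_ne i j with rfl | hij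
    · simp [hc]
    · simp [hij]
  exact Polynomial.funext fun s => by rw [hscale, hscale, h]

theorem charpoly_pencil_swap {A B D E : Matrix n n K}
    (h : (pencil A D).charpoly = (pencil B E).charpoly) :
    (pencil D A).charpoly = (pencil E B).charpoly := by
  refine eq_of_infinite_map_eval_eq (Set.finite_singleton 0).infinite_compl fun u hu => ?_
  have hscale (M N : Matrix n n K) : M - u • N = (-u) • (N - u⁻¹ • M) := by
    rw [smul_sub, smul_smul, neg_mul, mul_inv_cancel₀ hu, neg_smul, neg_smul, one_smul]
    abel
  rw [charpoly_pencil_map_eval, charpoly_pencil_map_eval, hscale D A, hscale E B]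
  apply charpoly_smul_eq_of_charpoly_eq
  rw [← charpoly_pencil_map_eval, ← charpoly_pencil_map_eval, h]

end Pencil

end Matrix

theorem isSymm_adjMatQ {V : Type*} (G : SimpleGraph V) : (adjMatQ G).IsSymm :=
  IsSymm.ext fun u v => by classical exact if_congr (G.adj_comm v u) rfl rfl

theorem isSymm_degMatQ {V : Type*} [DecidableEq V] (G : SimpleGraph V) : (degMatQ G).IsSymm :=
  isSymm_diagonal _

theorem AmuQ_eq_map_pencil {V : Type*} [Fintype V] [DecidableEq V] (G : SimpleGraph V) :
    AmuQ G = (pencil (adjMatQ G) (degMatQ G)).map (algebraMap ℚ[X] RatFuncQ) := by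
  ext u v
  simp only [AmuQ, muQ, pencil, Matrix.sub_apply, map_apply, Matrix.smul_apply, smul_eq_mul,
    map_sub, map_mul]

/-- If `A₁ - μD₁` and `A₂ - μD₂` are similar over `ℚ(μ)`, then `A₁` and `A₂` are
similar over `ℚ`, as are `D₁` and `D₂`. -/
theorem similar_over_ratFunc {V : Type*} [Fintype V] [DecidableEq V]
    (X Y : SimpleGraph V)
    (h : ∃ M : Matrix V V RatFuncQ, IsUnit M ∧ M⁻¹ * AmuQ X * M = AmuQ Y) :
    (∃ N : Matrix V V ℚ, IsUnit N ∧ N⁻¹ * adjMatQ X * N = adjMatQ Y) ∧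
    (∃ N : Matrix V V ℚ, IsUnit N ∧ N⁻¹ * degMatQ X * N = degMatQ Y) := by
  simp only [← isConj_iff_exists_isUnit_nonsing_inv_mul_mul_eq, AmuQ_eq_map_pencil] at h ⊢
  have hpencil := charpoly_eq_of_isConj_map (IsFractionRing.injective ℚ[X] RatFuncQ) h
  exact ⟨isConj_of_isSymm_of_charpoly_eq (isSymm_adjMatQ X) (isSymm_adjMatQ Y)
      (charpoly_eq_of_charpoly_pencil_eq hpencil),
    isConj_of_isSymm_of_charpoly_eq (isSymm_degMatQ X) (isSymm_degMatQ Y)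
      (charpoly_eq_of_charpoly_pencil_eq (charpoly_pencil_swap hpencil))⟩
end
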